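/- Let $p(n)$ be increasing with $1 \leq p(n) \uparrow \infty$, and choose a strictly increasing sequence of positive integers $\{l_k\}$ with $l_1 = 1$ and $p(l_{k-1}) \geq \ln k$ for all $k \geq 2$. Define $c_k = \left(\sum_{j=1}^k 1/\lambda_j\right)^{-1/4}$ for a nondecreasing positive sequence $\{\lambda_j\}$ with $\sum_j 1/\lambda_j = \infty$, let $r_k : [0,1] \to \mathbb{R}$ be the piecewise-linear 'tent' function supported on $[2^{-l_k}, 2^{-l_k+1}]$ with peak value $c_k$ at $3 \cdot 2^{-l_k - 1}$, and set $r(x,y) = \sum_{k=1}^\infty r_k(x) r_k(y)$. Then $r$ is continuous on $[0,1]^2$. -/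

import Mathlib

/-- The tent function of height `c` supported on `[2^{-lk}, 2^{-lk+1}]`, vanishing at the
endpoints and attaining its peak `c` at `3·2^{-lk-1}`. -/
noncomputable def tent (lk : ℕ) (c : ℝ) (x : ℝ) : ℝ :=
  if 1 / 2 ^ lk ≤ x ∧ x ≤ 3 / 2 ^ (lk + 1) then 2 ^ (lk + 1) * c * (x - 1 / 2 ^ lk)
  else if 3 / 2 ^ (lk + 1) ≤ x ∧ x ≤ 2 / 2 ^ lk then -(2 ^ (lk + 1)) * c * (x - 2 / 2 ^ lk)
  else 0

/-- `c_k = (∑_{j=1}^k 1/λ_j)^{-1/4}` (indices shifted to start at 0). -/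
noncomputable def csum (lam : ℕ → ℝ) (k : ℕ) : ℝ :=
  (∑ j ∈ Finset.range (k + 1), 1 / lam j) ^ (-(1 / 4 : ℝ))

/-- `r(x,y) = ∑_k r_k(x) r_k(y)` where `r_k = tent (l k) (c k)`. -/
noncomputable def rfun (lam : ℕ → ℝ) (l : ℕ → ℕ) (x y : ℝ) : ℝ :=
  ∑' k : ℕ, tent (l k) (csum lam k) x * tent (l k) (csum lam k) y
/-! The tents `r_k` have pairwise disjoint supports, so at each point at most one term of the
series is nonzero, and the tail after `N` terms is bounded by `sup_{k ≥ N} c_k²`. Since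
`∑ 1/λ_j = ∞`, `c_k → 0`, so the partial sums converge uniformly, and a uniform limit of
continuous functions is continuous. -/

open Filter Function Set Topology

lemma exists_forall_ne_eq_zero_of_pairwise_disjoint_support {ι X M : Type*} [Nonempty ι] [Zero M]
    {f : ι → X → M} (hf : Pairwise (Disjoint on fun k => support (f k))) (x : X) :
    ∃ k₀, ∀ k ≠ k₀, f k x = 0 := by
  by_cases h : ∃ k₀, f k₀ x ≠ 0
  · obtain ⟨k₀, hk₀⟩ := h
    exact ⟨k₀, fun k hk => by_contra fun hkx => disjoint_left.mp (hf hk) hkx hk₀⟩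
  · push Not at h
    exact ⟨Classical.arbitrary ι, fun k _ => h k⟩

section DisjointSupports

variable {X F : Type*} [NormedAddCommGroup F] {f : ℕ → X → F} {u : ℕ → ℝ}

lemma tendstoUniformly_tsum_of_pairwise_disjoint_support
    (hf : Pairwise (Disjoint on fun k => support (f k))) (hfu : ∀ k x, ‖f k x‖ ≤ u k)
    (hu : Tendsto u atTop (𝓝 0)) :
    TendstoUniformly (fun n x => ∑ k ∈ Finset.range n, f k x) (fun x => ∑' k, f k x)
      atTop := by
  rw [Metric.tendstoUniformly_iff]
  intro ε hε
  obtain ⟨N, hN⟩ := eventually_atTop.mp (hu.eventually (gt_mem_nhds hε))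
  filter_upwards [eventually_ge_atTop N] with n hn x
  obtain ⟨k₀, hk₀⟩ := exists_forall_ne_eq_zero_of_pairwise_disjoint_support hf x
  rw [tsum_eq_single k₀ hk₀]
  by_cases hk₀n : k₀ < n
  · rw [Finset.sum_eq_single_of_mem k₀ (Finset.mem_range.mpr hk₀n) fun k _ hk => hk₀ k hk,
      dist_self]
    exact hε
  · rw [Finset.sum_eq_zero fun k hk => hk₀ k (by grind), dist_zero_right]
    exact (hfu k₀ x).trans_lt (hN k₀ (by omega))

lemma continuous_tsum_of_pairwise_disjoint_support [TopologicalSpace X]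
    (hcont : ∀ k, Continuous (f k))
    (hf : Pairwise (Disjoint on fun k => support (f k))) (hfu : ∀ k x, ‖f k x‖ ≤ u k)
    (hu : Tendsto u atTop (𝓝 0)) :
    Continuous fun x => ∑' k, f k x :=
  (tendstoUniformly_tsum_of_pairwise_disjoint_support hf hfu hu).continuous
    (Frequently.of_forall fun _ => continuous_finsetSum _ fun k _ => hcont k)

end DisjointSupports

lemma tent_eq (lk : ℕ) (c x : ℝ) :
    tent lk c x = c * max 0 (1 - |2 ^ (lk + 1) * x - 3|) := by
  have hpos : (0 : ℝ) < 2 ^ (lk + 1) := by positivity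
  have h1 : (1 : ℝ) / 2 ^ lk = 2 / 2 ^ (lk + 1) := by rw [pow_succ]; field_simp
  have h2 : (2 : ℝ) / 2 ^ lk = 4 / 2 ^ (lk + 1) := by rw [pow_succ]; field_simp; norm_num
  obtain ⟨t, rfl⟩ : ∃ t : ℝ, x = t / 2 ^ (lk + 1) := ⟨2 ^ (lk + 1) * x, by field_simp⟩
  simp only [tent, h1, h2, div_le_div_iff_of_pos_right hpos, ← sub_div,
    mul_div_cancel₀ _ hpos.ne']
  split_ifs with hup hdown
  · rw [abs_of_nonpos (by linarith), max_eq_right (by linarith)]; field_simp; ring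
  · rw [abs_of_nonneg (by linarith), max_eq_right (by linarith)]; field_simp; ring
  · rw [max_eq_left (by grind), mul_zero]

lemma continuous_tent (lk : ℕ) (c : ℝ) : Continuous (tent lk c) := by
  simp only [funext (tent_eq lk c)]
  fun_prop

lemma abs_tent_le (lk : ℕ) (c x : ℝ) : |tent lk c x| ≤ |c| := by
  rw [tent_eq, abs_mul, abs_of_nonneg (a := max _ _) (le_max_left _ _)]
  exact mul_le_of_le_one_right (abs_nonneg c)
    (max_le zero_le_one (by linarith [abs_nonneg (2 ^ (lk + 1) * x - 3)]))

lemma support_tent_subset (lk : ℕ) (c : ℝ) :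
    support (tent lk c) ⊆ Ioo (1 / 2 ^ lk) (2 / 2 ^ lk) := by
  intro x hx
  have hs : (0 : ℝ) < 2 ^ lk := by positivity
  rw [mem_support, tent_eq] at hx
  have hlt : |2 ^ (lk + 1) * x - 3| < 1 := by
    by_contra! h
    exact hx (by rw [max_eq_left (by linarith), mul_zero])
  rw [abs_lt, pow_succ] at hlt
  rw [mem_Ioo, div_lt_iff₀ hs, lt_div_iff₀ hs]
  constructor <;> nlinarith

lemma disjoint_support_tent {la lb : ℕ} (h : la < lb) (a b : ℝ) :
    Disjoint (support (tent la a)) (support (tent lb b)) := by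
  have hgap : (2 : ℝ) / 2 ^ lb ≤ 1 / 2 ^ la := by
    rw [div_le_div_iff₀ (by positivity) (by positivity), one_mul, ← pow_succ']
    exact pow_le_pow_right₀ one_le_two h
  refine disjoint_left.mpr fun x ha hb => ?_
  have := (support_tent_subset la a ha).1
  have := (support_tent_subset lb b hb).2
  linarith

lemma tendsto_csum_zero {lam : ℕ → ℝ}
    (hdiv : Tendsto (fun m => ∑ j ∈ Finset.range m, 1 / lam j) atTop atTop) :
    Tendsto (csum lam) atTop (𝓝 0) :=
  (tendsto_rpow_neg_atTop (by norm_num)).comp (hdiv.comp (tendsto_add_atTop_nat 1))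

theorem rfun_continuousOn_general
    (lam : ℕ → ℝ)
    (hdiv : Filter.Tendsto (fun m => ∑ j ∈ Finset.range m, 1 / lam j)
      Filter.atTop Filter.atTop)
    (l : ℕ → ℕ) (hl : StrictMono l) :
    ContinuousOn (fun q : ℝ × ℝ => rfun lam l q.1 q.2)
      (Set.Icc 0 1 ×ˢ Set.Icc 0 1) := by
  set r : ℕ → ℝ → ℝ := fun k => tent (l k) (csum lam k)
  have hdisj : Pairwise (Disjoint on fun k => support fun q : ℝ × ℝ => r k q.1 * r k q.2) :=
    (pairwise_disjoint_on _).mpr fun a b hab =>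
      ((disjoint_support_tent (hl hab) _ _).preimage Prod.fst).mono
        (support_mul_subset_left _ _) (support_mul_subset_left _ _)
  have hbound (k : ℕ) (q : ℝ × ℝ) : ‖r k q.1 * r k q.2‖ ≤ csum lam k ^ 2 := by
    rw [Real.norm_eq_abs, abs_mul, ← sq_abs (csum lam k), sq]
    exact mul_le_mul (abs_tent_le _ _ _) (abs_tent_le _ _ _) (abs_nonneg _) (abs_nonneg _)
  have hcont (k : ℕ) : Continuous fun q : ℝ × ℝ => r k q.1 * r k q.2 :=
    ((continuous_tent _ _).comp continuous_fst).mul ((continuous_tent _ _).comp continuous_snd)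
  refine (continuous_tsum_of_pairwise_disjoint_support hcont hdisj hbound ?_).continuousOn
  simpa using (tendsto_csum_zero hdiv).pow 2

/-- the function `r(x,y) = ∑_k r_k(x) r_k(y)` built from tents of heights
`c_k = (∑_{j=1}^k 1/λ_j)^{-1/4}` on the disjoint dyadic intervals `[2^{-l_k}, 2^{-l_k+1}]`
is continuous on `[0,1]²`. -/
theorem rfun_continuousOn
    (lam : ℕ → ℝ) (hmono : Monotone lam) (hpos : ∀ n, 0 < lam n)
    (hdiv : Filter.Tendsto (fun m => ∑ j ∈ Finset.range m, 1 / lam j)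
      Filter.atTop Filter.atTop)
    (p : ℕ → ℝ) (hp1 : ∀ n, 1 ≤ p n) (hpmono : Monotone p)
    (hptop : Filter.Tendsto p Filter.atTop Filter.atTop)
    (l : ℕ → ℕ) (hl : StrictMono l) (hl0 : l 0 = 1)
    (hpl : ∀ k : ℕ, Real.log ((k : ℝ) + 2) ≤ p (l k)) :
    ContinuousOn (fun q : ℝ × ℝ => rfun lam l q.1 q.2)
      (Set.Icc 0 1 ×ˢ Set.Icc 0 1) :=
  rfun_continuousOn_general lam hdiv l hl
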